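/- For f: [0,∞) → ℝ continuous with supp f ⊆ [0,1], the constant α₀(f) = ∫_{ℝ⁵} (R_0^1(x))² dx equals (1/(3·8π²))·(1 + ∫_0^1 s⁴ (f(s²) + 1)² ds), and in particular α₀(f) ≥ 1/(24π²). -/

import Mathlib

/-!
`R0L f 1` is radial, so polar coordinates in `ℝ⁵` (where the unit sphere has area
`5 · |B₁| = 8π²/3`) reduce `α₀(f)` to `8π²/3 · (8π²)⁻² · ∫₀^∞ r⁴ P(r)² dr` for the radial
profile `P`. On `(0, 1]` the integrand is `r⁴ (f(r²) + 1)²`; beyond `1` the term `f(r²)`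
vanishes and the integrand is `r⁻²`, which contributes exactly `1`.
-/

open MeasureTheory Real

noncomputable def R0L (f : ℝ → ℝ) (Λ : ℝ) (x : EuclideanSpace ℝ (Fin 5)) : ℝ :=
  (Λ ^ 3 / (8 * π ^ 2)) * f (‖x‖ ^ 2 * Λ ^ 2) +
    (1 / (8 * π ^ 2)) * (if ‖x‖ ≤ 1 / Λ then Λ ^ 3 else ‖x‖⁻¹ ^ 3)

open Set Metric

lemma EuclideanSpace.volume_ball_fin_five (x : EuclideanSpace ℝ (Fin 5)) (r : ℝ) :
    volume (ball x r) = .ofReal r ^ 5 * .ofReal (8 * π ^ 2 / 15) := by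
  rw [InnerProductSpace.volume_ball_of_dim_odd (k := 2) (by simp) x]
  simp only [finrank_euclideanSpace_fin]
  norm_num [Nat.doubleFactorial, mul_comm]

lemma EuclideanSpace.integral_fun_norm_fin_five {F : Type*} [NormedAddCommGroup F]
    [NormedSpace ℝ F] (g : ℝ → F) :
    ∫ x : EuclideanSpace ℝ (Fin 5), g ‖x‖ = (8 * π ^ 2 / 3) • ∫ y in Ioi (0 : ℝ), y ^ 4 • g y := by
  rw [integral_fun_norm_addHaar, finrank_euclideanSpace_fin, measureReal_def,
    EuclideanSpace.volume_ball_fin_five, ENNReal.ofReal_one, one_pow, one_mul,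
    ENNReal.toReal_ofReal (by positivity), ← Nat.cast_smul_eq_nsmul ℝ, smul_smul]
  congr 1
  ring

noncomputable def R0Profile (f : ℝ → ℝ) (r : ℝ) : ℝ :=
  f (r ^ 2) + if r ≤ 1 then 1 else r⁻¹ ^ 3

lemma R0L_one_eq (f : ℝ → ℝ) (x : EuclideanSpace ℝ (Fin 5)) :
    R0L f 1 x = R0Profile f ‖x‖ / (8 * π ^ 2) := by
  simp only [R0L, R0Profile, one_pow, mul_one, div_one]
  ring

lemma R0Profile_of_le {f : ℝ → ℝ} {r : ℝ} (hr : r ≤ 1) : R0Profile f r = f (r ^ 2) + 1 := by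
  simp [R0Profile, hr]

lemma pow_four_mul_R0Profile_sq_of_one_lt {f : ℝ → ℝ} (hf : ∀ t, 1 < t → f t = 0) {r : ℝ}
    (hr : 1 < r) : r ^ 4 * R0Profile f r ^ 2 = r ^ (-2 : ℝ) := by
  have hr0 : 0 < r := one_pos.trans hr
  rw [R0Profile, if_neg hr.not_ge, hf _ (one_lt_pow₀ hr two_ne_zero), Real.rpow_neg hr0.le,
    Real.rpow_two]
  field_simp
  ring

lemma integral_pow_four_mul_R0Profile_sq {f : ℝ → ℝ} (hf : Continuous f)
    (hvanish : ∀ t, 1 < t → f t = 0) :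
    ∫ r in Ioi (0 : ℝ), r ^ 4 * R0Profile f r ^ 2 =
      1 + ∫ s in (0 : ℝ)..1, s ^ 4 * (f (s ^ 2) + 1) ^ 2 := by
  have hnear : EqOn (fun r ↦ r ^ 4 * R0Profile f r ^ 2) (fun s ↦ s ^ 4 * (f (s ^ 2) + 1) ^ 2)
      (Ioc 0 1) := fun r hr ↦ by simp only [R0Profile_of_le hr.2]
  have hfar : EqOn (fun r ↦ r ^ 4 * R0Profile f r ^ 2) (fun r ↦ r ^ (-2 : ℝ)) (Ioi 1) :=
    fun r hr ↦ pow_four_mul_R0Profile_sq_of_one_lt hvanish hr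
  have hint_near : IntegrableOn (fun r ↦ r ^ 4 * R0Profile f r ^ 2) (Ioc 0 1) :=
    (Continuous.integrableOn_Ioc (by fun_prop)).congr_fun hnear.symm measurableSet_Ioc
  have hint_far : IntegrableOn (fun r ↦ r ^ 4 * R0Profile f r ^ 2) (Ioi 1) :=
    ((integrableOn_Ioi_rpow_iff one_pos).mpr (by norm_num)).congr_fun hfar.symm measurableSet_Ioi
  rw [← Ioc_union_Ioi_eq_Ioi zero_le_one,
    setIntegral_union (Ioc_disjoint_Ioi le_rfl) measurableSet_Ioi hint_near hint_far,
    setIntegral_congr_fun measurableSet_Ioc hnear, setIntegral_congr_fun measurableSet_Ioi hfar,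
    integral_Ioi_rpow_of_lt (by norm_num) one_pos, intervalIntegral.integral_of_le zero_le_one]
  norm_num [add_comm]

/-- `α₀(f) = ∫_{ℝ⁵} (R₀^1(x))² dx = (1/(3·8π²))(1 + ∫₀¹ s⁴ (f(s²)+1)² ds)`, and in
particular `α₀(f) ≥ 1/(24π²)`. -/
theorem stmt7 (f : ℝ → ℝ) (hf : Continuous f) (hsupp : Function.support f ⊆ Set.Icc 0 1) :
    (∫ x, (R0L f 1 x) ^ 2)
        = (1 / (3 * (8 * π ^ 2))) * (1 + ∫ s in (0:ℝ)..1, s ^ 4 * (f (s ^ 2) + 1) ^ 2) ∧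
      (1 / (24 * π ^ 2) : ℝ) ≤ ∫ x, (R0L f 1 x) ^ 2 := by
  have hvanish : ∀ t, 1 < t → f t = 0 := fun t ht ↦
    Function.notMem_support.mp fun h ↦ (hsupp h).2.not_gt ht
  have hα : ∫ x, R0L f 1 x ^ 2 =
      1 / (3 * (8 * π ^ 2)) * (1 + ∫ s in (0:ℝ)..1, s ^ 4 * (f (s ^ 2) + 1) ^ 2) := by
    simp_rw [R0L_one_eq, div_pow]
    rw [EuclideanSpace.integral_fun_norm_fin_five (fun r ↦ R0Profile f r ^ 2 / (8 * π ^ 2) ^ 2)]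
    simp_rw [smul_eq_mul, ← mul_div_assoc]
    rw [integral_div, integral_pow_four_mul_R0Profile_sq hf hvanish]
    field_simp
  have hJ : 0 ≤ ∫ s in (0:ℝ)..1, s ^ 4 * (f (s ^ 2) + 1) ^ 2 :=
    intervalIntegral.integral_nonneg zero_le_one fun s _ ↦ by positivity
  refine ⟨hα, ?_⟩
  rw [hα, show (3 * (8 * π ^ 2) : ℝ) = 24 * π ^ 2 by ring]
  exact le_mul_of_one_le_right (by positivity) (by linarith)
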